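/- Let p_k^♯ denote the k-th primorial (the product of the first k primes). For every even integer d with 2 ≤ d < p_k^♯, the prime-pair singular series satisfies 𝔖(d) < 𝔖(p_k^♯). -/

import Mathlib

/-!
Write `𝔖(d) = 2C₂ ∏_{p ∈ Q(d)} f(p)` with `Q(d)` the odd prime factors of `d` and
`f(p) = (p-1)/(p-2)`, which is `> 1` and decreasing in `p`. Since `d` is even,
`∏ Q(d) ≤ d/2 < p_k^♯/2`, the product of the first `k - 1` odd primes. An induction on that number
of primes shows that a set of odd primes whose product is smaller than the product of the first `m`
odd primes has a smaller `f`-product: either its largest element is at least the `m`-th odd prime,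
and the two are paired off, or the set lies among the first `m - 1` odd primes and misses the
`m`-th one. Finally `C₂ > 0` because `∑ 1/(p-1)²` converges.
-/

open Finset

/-- The twin prime constant `C₂ = ∏_{p > 2} (1 - 1/(p-1)²)`. -/
noncomputable def twinC : ℝ :=
  ∏' p : Nat.Primes, if 2 < (p : ℕ) then (1 - 1 / (((p : ℕ) : ℝ) - 1) ^ 2) else 1

/-- The prime-pair singular series `𝔖(d) = 2C₂ ∏_{p ∣ d, p > 2} (p-1)/(p-2)` for even `d`. -/
noncomputable def S2 (d : ℕ) : ℝ :=
  2 * twinC * ∏ p ∈ d.primeFactors.filter (fun p => 2 < p), (((p : ℝ) - 1) / ((p : ℝ) - 2))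

/-- The `k`-th primorialK, the product of the first `k` primes. -/
noncomputable def primorialK (k : ℕ) : ℕ := ∏ i ∈ Finset.range k, Nat.nth Nat.Prime i

lemma Real.tprod_one_add_pos {ι : Type*} {a : ι → ℝ} (ha : Summable a) (h : ∀ i, -1 < a i) :
    0 < ∏' i, (1 + a i) := by
  rw [← Real.rexp_tsum_eq_tprod (fun i ↦ by linarith [h i])
    (Real.summable_log_one_add_of_summable ha)]
  exact Real.exp_pos _

lemma one_div_sub_one_sq_le {x : ℝ} (hx : 2 ≤ x) : 1 / (x - 1) ^ 2 ≤ 4 * (1 / x ^ 2) := by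
  calc 1 / (x - 1) ^ 2 ≤ 1 / (x / 2) ^ 2 :=
        one_div_le_one_div_of_le (by positivity) (by gcongr; linarith)
    _ = 4 * (1 / x ^ 2) := by ring

lemma twinC_pos : 0 < twinC := by
  let a : Nat.Primes → ℝ := fun p ↦ if 2 < (p : ℕ) then -(1 / (((p : ℕ) : ℝ) - 1) ^ 2) else 0
  have htwinC : twinC = ∏' p, (1 + a p) :=
    tprod_congr fun p ↦ by split_ifs <;> simp [a, *, sub_eq_add_neg]
  have hdom : Summable fun p : Nat.Primes ↦ 4 * (1 / ((p : ℕ) : ℝ) ^ 2) :=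
    ((Real.summable_one_div_nat_pow.2 one_lt_two).comp_injective
      Nat.Primes.coe_nat_injective).mul_left 4
  have hsum : Summable a := by
    refine hdom.of_norm_bounded fun p ↦ ?_
    simp only [a]
    split_ifs
    · rw [norm_neg, Real.norm_of_nonneg (by positivity)]
      exact one_div_sub_one_sq_le (by exact_mod_cast p.2.two_le)
    · rw [norm_zero]
      positivity
  refine htwinC ▸ Real.tprod_one_add_pos hsum fun p ↦ ?_
  simp only [a]
  split_ifs with hp
  · have hp3 : (3 : ℝ) ≤ (p : ℕ) := by exact_mod_cast hp
    have : 1 / (((p : ℕ) : ℝ) - 1) ^ 2 ≤ 1 / 4 :=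
      one_div_le_one_div_of_le (by norm_num) (by nlinarith)
    linarith
  · norm_num

noncomputable def pairFactor (x : ℝ) : ℝ := (x - 1) / (x - 2)

lemma one_lt_pairFactor {x : ℝ} (hx : 2 < x) : 1 < pairFactor x := by
  rw [pairFactor, one_lt_div (by linarith)]
  linarith

lemma pairFactor_antitoneOn : AntitoneOn pairFactor (Set.Ioi 2) := by
  intro x hx y hy hxy
  rw [Set.mem_Ioi] at hx hy
  rw [pairFactor, pairFactor, div_le_div_iff₀ (by linarith) (by linarith)]
  nlinarith

theorem prod_lt_prod_range_of_prod_lt {s : ℕ → ℕ} (hs : Monotone s) (hs0 : ∀ i, 0 < s i)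
    {g : ℕ → ℝ} (hg : Antitone g) (hg1 : ∀ i, 1 < g i) (m : ℕ) (B : Finset ℕ)
    (h : ∏ i ∈ B, s i < ∏ i ∈ range m, s i) : ∏ i ∈ B, g i < ∏ i ∈ range m, g i := by
  induction m generalizing B with
  | zero =>
    have : 1 ≤ ∏ i ∈ B, s i := one_le_prod' fun i _ ↦ hs0 i
    rw [prod_range_zero] at h
    omega
  | succ m ih =>
    have hg0 : ∀ i, 0 < g i := fun i ↦ one_pos.trans (hg1 i)
    rw [prod_range_succ] at h ⊢
    by_cases hB : ∃ j ∈ B, m ≤ j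
    · -- pair the largest factor `s m` on the right with a factor `s j ≥ s m` on the left
      obtain ⟨j, hj, hmj⟩ := hB
      rw [← mul_prod_erase B _ hj] at h ⊢
      have hrest : ∏ i ∈ B.erase j, s i < ∏ i ∈ range m, s i := by
        refine lt_of_mul_lt_mul_left ?_ (Nat.zero_le (s m))
        calc s m * ∏ i ∈ B.erase j, s i ≤ s j * ∏ i ∈ B.erase j, s i := by gcongr; exact hs hmj
          _ < _ := h
          _ = s m * ∏ i ∈ range m, s i := mul_comm _ _
      calc g j * ∏ i ∈ B.erase j, g i ≤ g m * ∏ i ∈ B.erase j, g i :=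
            mul_le_mul_of_nonneg_right (hg hmj) (prod_pos fun i _ ↦ hg0 i).le
        _ < g m * ∏ i ∈ range m, g i := mul_lt_mul_of_pos_left (ih _ hrest) (hg0 m)
        _ = _ := mul_comm _ _
    · push Not at hB
      calc ∏ i ∈ B, g i ≤ ∏ i ∈ range m, g i :=
            prod_le_prod_of_subset_of_one_le (fun i hi ↦ mem_range.2 (hB i hi))
              (fun i _ ↦ (hg0 i).le) fun i _ _ ↦ (hg1 i).le
        _ < _ := lt_mul_of_one_lt_right (prod_pos fun i _ ↦ hg0 i) (hg1 m)

-- Indexed from `0`: `oddPrime 0 = 3`.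
noncomputable def oddPrime (i : ℕ) : ℕ := Nat.nth Nat.Prime (i + 1)

lemma oddPrime_strictMono : StrictMono oddPrime :=
  (Nat.nth_strictMono Nat.infinite_setOfPred_prime).comp (strictMono_id.add_const 1)

lemma oddPrime_prime (i : ℕ) : (oddPrime i).Prime :=
  Nat.nth_mem_of_infinite Nat.infinite_setOfPred_prime _

lemma two_lt_oddPrime (i : ℕ) : 2 < oddPrime i := by
  rw [← Nat.nth_prime_zero_eq_two]
  exact Nat.nth_strictMono Nat.infinite_setOfPred_prime i.succ_pos

lemma exists_eq_image_oddPrime {A : Finset ℕ} (hA : ∀ p ∈ A, p.Prime ∧ 2 < p) :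
    ∃ B : Finset ℕ, A = B.image oddPrime := by
  refine ⟨A.image (Nat.count Nat.Prime · - 1), ?_⟩
  rw [image_image]
  nth_rewrite 1 [← image_id (s := A)]
  refine image_congr fun p hp ↦ ?_
  obtain ⟨hp, h2p⟩ := hA p hp
  have hcount := Nat.nth_count hp
  have hcount0 : Nat.count Nat.Prime p ≠ 0 := by
    rintro h
    rw [h, Nat.nth_prime_zero_eq_two] at hcount
    omega
  simp only [Function.comp_apply, oddPrime, Nat.sub_add_cancel (Nat.one_le_iff_ne_zero.2 hcount0),
    hcount, id]

def oddPrimeFactors (n : ℕ) : Finset ℕ := n.primeFactors.filter (2 < ·)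

lemma two_mul_prod_oddPrimeFactors_le {d : ℕ} (he : Even d) (hd : d ≠ 0) :
    2 * ∏ p ∈ oddPrimeFactors d, p ≤ d := by
  have h2 : 2 ∉ oddPrimeFactors d := by simp [oddPrimeFactors]
  have hsub : insert 2 (oddPrimeFactors d) ⊆ d.primeFactors :=
    insert_subset (Nat.mem_primeFactors.2 ⟨Nat.prime_two, he.two_dvd, hd⟩) (filter_subset _ _)
  calc 2 * ∏ p ∈ oddPrimeFactors d, p = ∏ p ∈ insert 2 (oddPrimeFactors d), p :=
        (prod_insert (f := fun p ↦ p) h2).symm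
    _ ≤ d := Nat.le_of_dvd (Nat.pos_of_ne_zero hd)
      ((prod_dvd_prod_of_subset _ _ _ hsub).trans (Nat.prod_primeFactors_dvd d))

lemma S2_eq_prod_oddPrimeFactors (d : ℕ) :
    S2 d = 2 * twinC * ∏ p ∈ oddPrimeFactors d, pairFactor p :=
  rfl

lemma primorialK_succ (k : ℕ) : primorialK (k + 1) = 2 * ∏ i ∈ range k, oddPrime i := by
  rw [primorialK, prod_range_succ', Nat.nth_prime_zero_eq_two, mul_comm]
  rfl

lemma oddPrimeFactors_primorialK_succ (k : ℕ) :
    oddPrimeFactors (primorialK (k + 1)) = (range k).image oddPrime := by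
  have h2 : 2 ∉ (range k).image oddPrime := by
    simpa using fun i _ ↦ (two_lt_oddPrime i).ne'
  have hprime : ∀ p ∈ insert 2 ((range k).image oddPrime), p.Prime := by
    simpa using ⟨Nat.prime_two, fun i _ ↦ oddPrime_prime i⟩
  have hprimorial : primorialK (k + 1) = ∏ p ∈ insert 2 ((range k).image oddPrime), p := by
    rw [prod_insert h2, prod_image oddPrime_strictMono.injective.injOn, primorialK_succ]
  rw [oddPrimeFactors, hprimorial, Nat.primeFactors_prod hprime, filter_insert,
    if_neg (lt_irrefl 2), filter_true_of_mem]
  simpa using fun i _ ↦ two_lt_oddPrime i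

lemma pairFactor_oddPrime_antitone : Antitone fun i ↦ pairFactor (oddPrime i) :=
  fun i j hij ↦ pairFactor_antitoneOn (Set.mem_Ioi.2 (by exact_mod_cast two_lt_oddPrime i))
    (Set.mem_Ioi.2 (by exact_mod_cast two_lt_oddPrime j))
    (by exact_mod_cast oddPrime_strictMono.monotone hij)

theorem S2_lt_S2_primorial_general (k : ℕ) (d : ℕ) (he : Even d)
    (h2 : 2 ≤ d) (hlt : d < primorialK k) :
    S2 d < S2 (primorialK k) := by
  obtain ⟨k, rfl⟩ : ∃ k', k = k' + 1 :=
    Nat.exists_eq_add_one.2 <| Nat.pos_of_ne_zero fun hk ↦ by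
    simp only [hk, primorialK, range_zero, prod_empty] at hlt
    omega
  obtain ⟨B, hB⟩ := exists_eq_image_oddPrime (A := oddPrimeFactors d) fun p hp ↦ by
    simp only [oddPrimeFactors, mem_filter, Nat.mem_primeFactors] at hp
    exact ⟨hp.1.1, hp.2⟩
  have hinj := oddPrime_strictMono.injective
  have hprod : ∏ i ∈ B, oddPrime i < ∏ i ∈ range k, oddPrime i := by
    have hle := two_mul_prod_oddPrimeFactors_le he (by omega)
    rw [hB, prod_image hinj.injOn] at hle
    rw [primorialK_succ] at hlt
    omega
  have key := prod_lt_prod_range_of_prod_lt oddPrime_strictMono.monotone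
    (fun i ↦ (oddPrime_prime i).pos) pairFactor_oddPrime_antitone
    (fun i ↦ one_lt_pairFactor (by exact_mod_cast two_lt_oddPrime i)) k B hprod
  rw [S2_eq_prod_oddPrimeFactors, S2_eq_prod_oddPrimeFactors, oddPrimeFactors_primorialK_succ, hB,
    prod_image hinj.injOn, prod_image hinj.injOn]
  exact mul_lt_mul_of_pos_left key (by linarith [twinC_pos])

theorem S2_lt_S2_primorial (k : ℕ) (hk : 1 ≤ k) (d : ℕ) (he : Even d)
    (h2 : 2 ≤ d) (hlt : d < primorialK k) :
    S2 d < S2 (primorialK k) :=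
  S2_lt_S2_primorial_general k d he h2 hlt
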